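/- Let t₀ ~ N(μ, σ²) with σ > 0 and let T be uniformly distributed on [c, d) with 0 ≤ c < d, independent of t₀. Define x(t) = a·1_{t₀ ≤ t < t₀ + T}. Then E[x(t)] = a·[1 − Q((t−μ)/σ) + (σ/(d−c))·(c'Q(c') − d'Q(d') + φ(d') − φ(c') + d' − c')], where c' = (t−c−μ)/σ, d' = (t−d−μ)/σ, Q(x) = 1 − Φ(x), and φ is the standard normal density. -/

import Mathlib

open MeasureTheory ProbabilityTheory Real Set

/-- The Gaussian Q-function `Q(x) = (1/√(2π)) ∫_x^∞ e^{−u²/2} du`. -/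
noncomputable def gaussQ (x : ℝ) : ℝ :=
  (Real.sqrt (2 * Real.pi))⁻¹ * ∫ u in Set.Ioi x, Real.exp (-u ^ 2 / 2)

/-- The standard normal density `φ`. -/
noncomputable def stdNormalPDF (x : ℝ) : ℝ :=
  (Real.sqrt (2 * Real.pi))⁻¹ * Real.exp (-x ^ 2 / 2)

/-!
By independence and Fubini, the expectation is `a` times the average over `u ∈ [c, d)` of
`P(t - u < t₀ ≤ t) = Q((t - u - μ)/σ) - Q((t - μ)/σ)` (an identity only for `u ≥ 0`).
Since `Q' = -φ` and `φ'(z) = -z φ(z)`, the function `z Q(z) - φ(z)` is an antiderivative of `Q`,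
which makes the average explicit. The terms `1` and `d' - c'` of the closed form cancel, because
`σ (d' - c') = c - d`.
-/

open scoped NNReal

lemma integrable_exp_neg_sq_div_two : Integrable fun x : ℝ => exp (-x ^ 2 / 2) := by
  simpa [neg_div, div_eq_inv_mul] using integrable_exp_neg_mul_sq (b := 1 / 2) (by norm_num)

lemma hasDerivAt_stdNormalPDF (x : ℝ) :
    HasDerivAt stdNormalPDF (-x * stdNormalPDF x) x := by
  have h : HasDerivAt (fun y : ℝ => -y ^ 2 / 2) (-x) x :=
    ((hasDerivAt_pow 2 x).neg.div_const 2).congr_deriv (by norm_num; ring)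
  exact (h.exp.const_mul _).congr_deriv (by unfold stdNormalPDF; ring)

lemma hasDerivAt_gaussQ (x : ℝ) : HasDerivAt gaussQ (-stdNormalPDF x) x := by
  have hcont : Continuous fun u : ℝ => exp (-u ^ 2 / 2) := by fun_prop
  have hsplit : gaussQ = fun y => (√(2 * π))⁻¹ *
      ((∫ u in Ioi 0, exp (-u ^ 2 / 2)) - ∫ u in (0 : ℝ)..y, exp (-u ^ 2 / 2)) := by
    ext y
    rw [gaussQ, ← intervalIntegral.integral_interval_add_Ioi
      integrable_exp_neg_sq_div_two.integrableOn integrable_exp_neg_sq_div_two.integrableOn,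
      intervalIntegral.integral_symm]
    ring
  rw [hsplit]
  exact (((hcont.integral_hasStrictDerivAt 0 x).hasDerivAt.const_sub _).const_mul _).congr_deriv
    (by unfold stdNormalPDF; ring)

lemma hasDerivAt_mul_gaussQ_sub_stdNormalPDF (x : ℝ) :
    HasDerivAt (fun z => z * gaussQ z - stdNormalPDF z) (gaussQ x) x :=
  (((hasDerivAt_id' x).mul (hasDerivAt_gaussQ x)).sub (hasDerivAt_stdNormalPDF x)).congr_deriv
    (by ring)

lemma continuous_gaussQ : Continuous gaussQ :=
  continuous_iff_continuousAt.2 fun x => (hasDerivAt_gaussQ x).continuousAt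

lemma integral_gaussQ_comp_sub_div {σ : ℝ} (hσ : σ ≠ 0) (x c d : ℝ) :
    ∫ u in c..d, gaussQ ((x - u) / σ)
      = σ * ((x - c) / σ * gaussQ ((x - c) / σ) - stdNormalPDF ((x - c) / σ)
          - ((x - d) / σ * gaussQ ((x - d) / σ) - stdNormalPDF ((x - d) / σ))) := by
  have hderiv (u : ℝ) : HasDerivAt
      (fun u => -σ * ((x - u) / σ * gaussQ ((x - u) / σ) - stdNormalPDF ((x - u) / σ)))
      (gaussQ ((x - u) / σ)) u :=
    (((hasDerivAt_mul_gaussQ_sub_stdNormalPDF _).comp u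
      (((hasDerivAt_id' u).const_sub x).div_const σ)).const_mul (-σ)).congr_deriv
      (by field_simp)
  rw [intervalIntegral.integral_eq_sub_of_hasDerivAt (fun u _ => hderiv u)
    ((continuous_gaussQ.comp (by fun_prop)).intervalIntegrable _ _)]
  ring

lemma gaussianPDFReal_zero_one : gaussianPDFReal 0 1 = stdNormalPDF := by
  ext x
  simp [gaussianPDFReal, stdNormalPDF]

lemma gaussianReal_zero_one_real_Ioi (x : ℝ) : (gaussianReal 0 1).real (Ioi x) = gaussQ x := by
  rw [measureReal_def, gaussianReal_apply_eq_integral _ one_ne_zero,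
    ENNReal.toReal_ofReal (setIntegral_nonneg measurableSet_Ioi fun _ _ =>
      gaussianPDFReal_nonneg _ _ _),
    gaussianPDFReal_zero_one, gaussQ, ← integral_const_mul]
  rfl

section Standardize

variable (μ : ℝ) {v : ℝ≥0} {σ : ℝ} (hv : (v : ℝ) = σ ^ 2)
include hv

lemma gaussianReal_map_standardize (hσ : σ ≠ 0) :
    (gaussianReal μ v).map (fun s => (s - μ) / σ) = gaussianReal 0 1 := by
  have hcomp : (fun s => (s - μ) / σ) = (· / σ) ∘ (· - μ) := rfl
  rw [hcomp, ← Measure.map_map (by fun_prop) (by fun_prop), gaussianReal_map_sub_const,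
    gaussianReal_map_div_const, sub_self, zero_div]
  congr
  ext
  simp [hv, hσ]

lemma gaussianReal_real_Ioi (hσ : 0 < σ) (x : ℝ) :
    (gaussianReal μ v).real (Ioi x) = gaussQ ((x - μ) / σ) := by
  rw [← gaussianReal_zero_one_real_Ioi, ← gaussianReal_map_standardize μ hv hσ.ne',
    map_measureReal_apply (by fun_prop) measurableSet_Ioi]
  congr
  ext s
  simp [div_lt_div_iff_of_pos_right hσ]

lemma gaussianReal_real_Ioc (hσ : 0 < σ) {p q : ℝ} (hpq : p ≤ q) :
    (gaussianReal μ v).real (Ioc p q) = gaussQ ((p - μ) / σ) - gaussQ ((q - μ) / σ) := by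
  rw [← Ioi_sdiff_Ioi, measureReal_sdiff (Ioi_subset_Ioi hpq) measurableSet_Ioi,
    gaussianReal_real_Ioi μ hv hσ, gaussianReal_real_Ioi μ hv hσ]

lemma integral_ite_le_lt_add_gaussianReal (hσ : 0 < σ) (a t : ℝ) {u : ℝ} (hu : 0 ≤ u) :
    ∫ s, (if s ≤ t ∧ t < s + u then a else 0) ∂(gaussianReal μ v)
      = a * (gaussQ ((t - μ - u) / σ) - gaussQ ((t - μ) / σ)) := by
  have hIoc (s : ℝ) :
      (if s ≤ t ∧ t < s + u then a else 0) = (Ioc (t - u) t).indicator (fun _ => a) s := by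
    simp only [indicator_apply, mem_Ioc, sub_lt_iff_lt_add, and_comm]
  simp_rw [hIoc]
  rw [integral_indicator_const _ measurableSet_Ioc, smul_eq_mul,
    gaussianReal_real_Ioc μ hv hσ (by linarith), sub_right_comm, mul_comm]

end Standardize

lemma ProbabilityTheory.IndepFun.integral_comp_eq_integral_integral {Ω α β E : Type*}
    [MeasurableSpace Ω] [MeasurableSpace α] [MeasurableSpace β]
    [NormedAddCommGroup E] [NormedSpace ℝ E]
    {P : Measure Ω} [IsFiniteMeasure P] {X : Ω → α} {Y : Ω → β}
    (hX : AEMeasurable X P) (hY : AEMeasurable Y P) (hXY : IndepFun X Y P)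
    {f : α × β → E} (hf : Integrable f ((P.map X).prod (P.map Y))) :
    ∫ ω, f (X ω, Y ω) ∂P = ∫ y, ∫ x, f (x, y) ∂(P.map X) ∂(P.map Y) := by
  have hjoint := (indepFun_iff_map_prod_eq_prod_map_map hX hY).1 hXY
  rw [← integral_prod_symm f hf, ← hjoint, integral_map (hX.prodMk hY)]
  exact hjoint ▸ hf.aestronglyMeasurable

lemma integral_smul_restrict_Ico {c d : ℝ} (hcd : c ≤ d) (f : ℝ → ℝ) :
    ∫ u, f u ∂((ENNReal.ofReal (d - c))⁻¹ • volume.restrict (Ico c d))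
      = (d - c)⁻¹ * ∫ u in Ico c d, f u := by
  rw [integral_smul_measure, ENNReal.toReal_inv, ENNReal.toReal_ofReal (sub_nonneg.2 hcd),
    smul_eq_mul]

theorem phev_expected_demand_gaussian_uniform_general {Ω : Type*} [MeasureSpace Ω]
    [IsProbabilityMeasure (ℙ : Measure Ω)]
    (t₀ T : Ω → ℝ) (ht₀ : Measurable t₀) (hT : Measurable T)
    (hindep : IndepFun t₀ T)
    (μ σ : ℝ) (hσ : 0 < σ)
    (hgauss : Measure.map t₀ ℙ = gaussianReal μ ⟨σ ^ 2, sq_nonneg σ⟩)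
    (c d : ℝ) (hc : 0 ≤ c) (hcd : c < d)
    (hunif : Measure.map T ℙ
      = (ENNReal.ofReal (d - c))⁻¹ • volume.restrict (Set.Ico c d))
    (a : ℝ) (t : ℝ) :
    (∫ ω, (if t₀ ω ≤ t ∧ t < t₀ ω + T ω then a else 0) ∂ℙ)
      = a * (1 - gaussQ ((t - μ) / σ)
          + σ / (d - c) *
            (((t - c - μ) / σ) * gaussQ ((t - c - μ) / σ)
              - ((t - d - μ) / σ) * gaussQ ((t - d - μ) / σ)
              + stdNormalPDF ((t - d - μ) / σ) - stdNormalPDF ((t - c - μ) / σ)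
              + (t - d - μ) / σ - (t - c - μ) / σ)) := by
  have hS : MeasurableSet {p : ℝ × ℝ | p.1 ≤ t ∧ t < p.1 + p.2} := by measurability
  have hint : IntervalIntegrable (fun u => gaussQ ((t - μ - u) / σ)) volume c d :=
    (continuous_gaussQ.comp (by fun_prop)).intervalIntegrable _ _
  calc (∫ ω, (if t₀ ω ≤ t ∧ t < t₀ ω + T ω then a else 0) ∂ℙ)
      = ∫ u, ∫ s, (if s ≤ t ∧ t < s + u then a else 0)
          ∂(Measure.map t₀ ℙ) ∂(Measure.map T ℙ) := by
        simpa only [indicator_apply, mem_ofPred_eq] using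
          hindep.integral_comp_eq_integral_integral ht₀.aemeasurable hT.aemeasurable
            ((integrable_const a).indicator hS)
    _ = (d - c)⁻¹ *
          ∫ u in c..d, a * (gaussQ ((t - μ - u) / σ) - gaussQ ((t - μ) / σ)) := by
        rw [hgauss, hunif, integral_smul_restrict_Ico hcd.le,
          setIntegral_congr_fun measurableSet_Ico fun u hu =>
            integral_ite_le_lt_add_gaussianReal μ (v := ⟨σ ^ 2, sq_nonneg σ⟩) rfl hσ a t
              (hc.trans hu.1),
          integral_Ico_eq_integral_Ioc, ← intervalIntegral.integral_of_le hcd.le]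
    _ = _ := by
        rw [intervalIntegral.integral_const_mul, intervalIntegral.integral_sub hint
          intervalIntegrable_const, intervalIntegral.integral_const,
          integral_gaussQ_comp_sub_div hσ.ne', sub_right_comm t μ c, sub_right_comm t μ d]
        have hdc : d - c ≠ 0 := sub_ne_zero.2 hcd.ne'
        field_simp
        ring

/-- closed form of the expected uncoordinated charging demand when
`t₀ ~ N(μ, σ²)` and `T` is uniform on `[c, d)`, independent of `t₀`. -/
theorem phev_expected_demand_gaussian_uniform {Ω : Type*} [MeasureSpace Ω]
    [IsProbabilityMeasure (ℙ : Measure Ω)]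
    (t₀ T : Ω → ℝ) (ht₀ : Measurable t₀) (hT : Measurable T)
    (hindep : IndepFun t₀ T)
    (μ σ : ℝ) (hσ : 0 < σ)
    (hgauss : Measure.map t₀ ℙ = gaussianReal μ ⟨σ ^ 2, sq_nonneg σ⟩)
    (c d : ℝ) (hc : 0 ≤ c) (hcd : c < d)
    (hunif : Measure.map T ℙ
      = (ENNReal.ofReal (d - c))⁻¹ • volume.restrict (Set.Ico c d))
    (a : ℝ) (ha : 0 < a) (t : ℝ) :
    (∫ ω, (if t₀ ω ≤ t ∧ t < t₀ ω + T ω then a else 0) ∂ℙ)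
      = a * (1 - gaussQ ((t - μ) / σ)
          + σ / (d - c) *
            (((t - c - μ) / σ) * gaussQ ((t - c - μ) / σ)
              - ((t - d - μ) / σ) * gaussQ ((t - d - μ) / σ)
              + stdNormalPDF ((t - d - μ) / σ) - stdNormalPDF ((t - c - μ) / σ)
              + (t - d - μ) / σ - (t - c - μ) / σ)) :=
  phev_expected_demand_gaussian_uniform_general t₀ T ht₀ hT hindep μ σ hσ hgauss c d hc hcd hunif a
    t
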